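/- arXiv:1107.3380 — 2 statements merged into one kernel-verified Lean document; each statement's English description precedes it below -/
import Mathlib

section
/- Let X be a set of d+2 points in R^d such that the points of X together with the origin 0 are pairwise distinct and in general position (any d+1 of these points are affinely independent), and suppose 0 ∈ conv(X). Then there exist exactly two subsets Y ⊆ X with |Y| = d+1 and 0 ∈ conv(Y). -/
open scoped Classical

theorem my_dep_zero (d : ℕ) (X : Finset (EuclideanSpace ℝ (Fin d)))
    (hcard : X.card = d + 2)
    (h0 : (0 : EuclideanSpace ℝ (Fin d)) ∉ X)
    (hgen : ∀ T : Finset (EuclideanSpace ℝ (Fin d)),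
      (T : Set (EuclideanSpace ℝ (Fin d))) ⊆
        insert (0 : EuclideanSpace ℝ (Fin d)) (X : Set (EuclideanSpace ℝ (Fin d))) →
      T.card = d + 1 →
      AffineIndependent ℝ (fun x : T => (x : EuclideanSpace ℝ (Fin d))))
    (S : Finset (EuclideanSpace ℝ (Fin d)))
    (hS : S ⊆ insert 0 X) (hScard : S.card ≤ d + 1)
    (b : EuclideanSpace ℝ (Fin d) → ℝ)
    (hb1 : ∑ x ∈ S, b x = 0)
    (hb2 : ∑ x ∈ S, b x • x = 0) :
    ∀ x ∈ S, b x = 0 := by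
  obtain ⟨U, hSU, hUsub, hUcard⟩ := Finset.exists_subsuperset_card_eq hS hScard
    (by rw [Finset.card_insert_of_notMem h0, hcard]; omega)
  have hind := hgen U (by
    refine subset_trans (Finset.coe_subset.mpr hUsub) ?_
    rw [Finset.coe_insert]) hUcard
  rw [affineIndependent_iff] at hind
  have key := hind U.attach (fun i => if (i : EuclideanSpace ℝ (Fin d)) ∈ S then b ↑i else 0)
    ?_ ?_
  · intro x hx
    have hxU : x ∈ U := hSU hx
    have := key ⟨x, hxU⟩ (Finset.mem_attach _ _)
    simpa [hx] using this
  · rw [Finset.sum_attach U (fun x => if x ∈ S then b x else 0), Finset.sum_ite_mem,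
      Finset.inter_eq_right.mpr hSU, hb1]
  · rw [Finset.sum_attach U (fun x => (if x ∈ S then b x else 0) • x)]
    rw [show (∑ x ∈ U, (if x ∈ S then b x else 0) • x)
        = ∑ x ∈ U, (if x ∈ S then b x • x else 0) by
      refine Finset.sum_congr rfl fun x _ => ?_
      split <;> simp]
    rw [Finset.sum_ite_mem, Finset.inter_eq_right.mpr hSU, hb2]

/-- If `X` is a set of `d + 2` points in `ℝ^d` which together with `0` are in general
position, and `0 ∈ conv X`, then there are exactly two subsets `Y ⊆ X` with `|Y| = d + 1`
and `0 ∈ conv Y`. -/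
theorem exactly_two_subsimplices (d : ℕ)
    (X : Finset (EuclideanSpace ℝ (Fin d)))
    (hcard : X.card = d + 2)
    (h0 : (0 : EuclideanSpace ℝ (Fin d)) ∉ X)
    (hgen : ∀ T : Finset (EuclideanSpace ℝ (Fin d)),
      (T : Set (EuclideanSpace ℝ (Fin d))) ⊆
        insert (0 : EuclideanSpace ℝ (Fin d)) (X : Set (EuclideanSpace ℝ (Fin d))) →
      T.card = d + 1 →
      AffineIndependent ℝ (fun x : T => (x : EuclideanSpace ℝ (Fin d))))
    (hX : (0 : EuclideanSpace ℝ (Fin d)) ∈ convexHull ℝ (X : Set (EuclideanSpace ℝ (Fin d)))) :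
    ∃ Y₁ Y₂ : Finset (EuclideanSpace ℝ (Fin d)), Y₁ ≠ Y₂ ∧
      (Y₁ ⊆ X ∧ Y₁.card = d + 1 ∧
        (0 : EuclideanSpace ℝ (Fin d)) ∈ convexHull ℝ (Y₁ : Set (EuclideanSpace ℝ (Fin d)))) ∧
      (Y₂ ⊆ X ∧ Y₂.card = d + 1 ∧
        (0 : EuclideanSpace ℝ (Fin d)) ∈ convexHull ℝ (Y₂ : Set (EuclideanSpace ℝ (Fin d)))) ∧
      ∀ Y : Finset (EuclideanSpace ℝ (Fin d)),
        Y ⊆ X → Y.card = d + 1 →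
        (0 : EuclideanSpace ℝ (Fin d)) ∈ convexHull ℝ (Y : Set (EuclideanSpace ℝ (Fin d))) →
        Y = Y₁ ∨ Y = Y₂ := by
  -- weights for 0 ∈ conv X
  rw [Finset.convexHull_eq] at hX
  obtain ⟨c, hc0, hc1, hcc⟩ := hX
  have hcsum : ∑ x ∈ X, c x • x = 0 := by
    rw [Finset.centerMass_eq_of_sum_1 _ _ hc1] at hcc
    simpa using hcc
  -- affine dependence
  have hdep : ¬ AffineIndependent ℝ (fun x : X => (x : EuclideanSpace ℝ (Fin d))) := by
    intro h
    have h1 := h.card_le_finrank_succ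
    have h2 : Module.finrank ℝ
        (vectorSpan ℝ (Set.range fun x : X => (x : EuclideanSpace ℝ (Fin d)))) ≤ d := by
      refine le_trans (Submodule.finrank_le _) ?_
      simp
    rw [Fintype.card_coe, hcard] at h1
    omega
  rw [affineIndependent_iff_of_fintype] at hdep
  push_neg at hdep
  obtain ⟨w, hw1, hw2, i0, hi0⟩ := hdep
  rw [Finset.univ.weightedVSub_eq_linear_combination hw1] at hw2
  set a : EuclideanSpace ℝ (Fin d) → ℝ :=
    fun x => if h : x ∈ X then w ⟨x, h⟩ else 0 with ha_def
  have haa : ∀ i : X, a ↑i = w i := by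
    intro i; simp [ha_def]
  have ha1 : ∑ x ∈ X, a x = 0 := by
    rw [← Finset.sum_attach X a]
    rw [Finset.sum_congr rfl fun i _ => haa i]
    rw [← Finset.univ_eq_attach]; exact hw1
  have ha2 : ∑ x ∈ X, a x • x = 0 := by
    rw [← Finset.sum_attach X (fun x => a x • x)]
    rw [Finset.sum_congr rfl fun i (_ : i ∈ X.attach) => by rw [haa i]]
    rw [← Finset.univ_eq_attach]; exact hw2
  have hane : ∃ x ∈ X, a x ≠ 0 := ⟨↑i0, i0.2, by rw [haa i0]; exact hi0⟩
    -- a never vanishes on X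
  have herase_sub : ∀ x : EuclideanSpace ℝ (Fin d), X.erase x ⊆ insert 0 X :=
    fun x => (Finset.erase_subset x X).trans (Finset.subset_insert _ _)
  have herase_card : ∀ x ∈ X, (X.erase x).card = d + 1 := by
    intro x hx; rw [Finset.card_erase_of_mem hx, hcard]
    omega
  have hanz : ∀ x ∈ X, a x ≠ 0 := by
    intro x₀ hx₀ hz
    have hkey := my_dep_zero d X hcard h0 hgen (X.erase x₀) (herase_sub x₀)
      (le_of_eq (herase_card x₀ hx₀)) a ?_ ?_
    · obtain ⟨y, hy, hay⟩ := hane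
      rcases eq_or_ne y x₀ with rfl | hne
      · exact hay hz
      · exact hay (hkey y (Finset.mem_erase.mpr ⟨hne, hy⟩))
    · rw [Finset.sum_erase_eq_sub hx₀, ha1, hz, sub_zero]
    · rw [Finset.sum_erase_eq_sub hx₀, ha2, hz, zero_smul, sub_zero]
  -- no valid weight system vanishes at two points
  have htwo : ∀ v : EuclideanSpace ℝ (Fin d) → ℝ, (∑ x ∈ X, v x = 1) →
      (∑ x ∈ X, v x • x = 0) → ∀ x₀ ∈ X, ∀ x₁ ∈ X, x₀ ≠ x₁ →
      v x₀ = 0 → v x₁ = 0 → False := by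
    intro v hv1 hv2 x₀ hx₀ x₁ hx₁ hne hv0 hv1'
    set D : Finset (EuclideanSpace ℝ (Fin d)) := (X.erase x₀).erase x₁ with hD
    have hx₁D : x₁ ∈ X.erase x₀ := Finset.mem_erase.mpr ⟨hne.symm, hx₁⟩
    have hDX : D ⊆ X := (Finset.erase_subset _ _).trans (Finset.erase_subset _ _)
    have h0D : (0 : EuclideanSpace ℝ (Fin d)) ∉ D := fun h => h0 (hDX h)
    have hDcard : D.card = d := by
      rw [hD, Finset.card_erase_of_mem hx₁D, herase_card x₀ hx₀]
      omega
    set b : EuclideanSpace ℝ (Fin d) → ℝ := fun x => if x = 0 then -1 else v x with hb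
    have hbD : ∀ x ∈ D, b x = v x := by
      intro x hx
      have : x ≠ 0 := fun h => h0D (h ▸ hx)
      simp [hb, this]
    have hDsum : ∑ x ∈ D, v x = 1 := by
      rw [hD, Finset.sum_erase_eq_sub hx₁D, Finset.sum_erase_eq_sub hx₀, hv1, hv0, hv1']
      ring
    have hDsum2 : ∑ x ∈ D, v x • x = 0 := by
      rw [hD, Finset.sum_erase_eq_sub hx₁D, Finset.sum_erase_eq_sub hx₀, hv2, hv0, hv1']
      simp
    have hkey := my_dep_zero d X hcard h0 hgen (insert 0 D)
      (Finset.insert_subset_insert _ hDX)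
      (by rw [Finset.card_insert_of_notMem h0D, hDcard]) b ?_ ?_
    · have := hkey 0 (Finset.mem_insert_self _ _)
      simp [hb] at this
    · rw [Finset.sum_insert h0D, Finset.sum_congr rfl hbD, hDsum]
      simp [hb]
    · rw [Finset.sum_insert h0D,
        Finset.sum_congr rfl (fun x hx => by rw [hbD x hx] : ∀ x ∈ D, b x • x = v x • x),
        hDsum2]
      simp
    -- a takes both signs
  have hP : ∃ x ∈ X, 0 < a x := by
    by_contra h
    push_neg at h
    obtain ⟨y, hy, hay⟩ := hane
    exact hay ((Finset.sum_eq_zero_iff_of_nonpos h).mp ha1 y hy)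
  have hN : ∃ x ∈ X, a x < 0 := by
    by_contra h
    push_neg at h
    obtain ⟨y, hy, hay⟩ := hane
    exact hay ((Finset.sum_eq_zero_iff_of_nonneg h).mp ha1 y hy)
  set P : Finset (EuclideanSpace ℝ (Fin d)) := X.filter (fun x => 0 < a x) with hPdef
  set N : Finset (EuclideanSpace ℝ (Fin d)) := X.filter (fun x => a x < 0) with hNdef
  have hPne : P.Nonempty := by
    obtain ⟨x, hx, hax⟩ := hP; exact ⟨x, Finset.mem_filter.mpr ⟨hx, hax⟩⟩
  have hNne : N.Nonempty := by
    obtain ⟨x, hx, hax⟩ := hN; exact ⟨x, Finset.mem_filter.mpr ⟨hx, hax⟩⟩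
  set tp : ℝ := N.inf' hNne (fun x => c x / (-a x)) with htp
  set tm : ℝ := P.sup' hPne (fun x => -c x / a x) with htm
  have htpnn : 0 ≤ tp := by
    rw [htp, Finset.le_inf'_iff]
    intro x hx
    obtain ⟨hxX, hax⟩ := Finset.mem_filter.mp hx
    exact div_nonneg (hc0 x hxX) (by linarith)
  have htmnp : tm ≤ 0 := by
    rw [htm, Finset.sup'_le_iff]
    intro x hx
    obtain ⟨hxX, hax⟩ := Finset.mem_filter.mp hx
    exact div_nonpos_of_nonpos_of_nonneg (by linarith [hc0 x hxX]) hax.le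
  -- the weight functions at the endpoints
  set wp : EuclideanSpace ℝ (Fin d) → ℝ := fun x => c x + tp * a x with hwp
  set wm : EuclideanSpace ℝ (Fin d) → ℝ := fun x => c x + tm * a x with hwm
  -- generic facts about c + t * a
  have hsum1 : ∀ t : ℝ, ∑ x ∈ X, (c x + t * a x) = 1 := by
    intro t
    rw [Finset.sum_add_distrib, hc1, ← Finset.mul_sum, ha1, mul_zero, add_zero]
  have hsum2 : ∀ t : ℝ, ∑ x ∈ X, (c x + t * a x) • x = 0 := by
    intro t
    have : ∀ x ∈ X, (c x + t * a x) • x = c x • x + t • (a x • x) := by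
      intro x _; rw [add_smul, mul_smul]
    rw [Finset.sum_congr rfl this, Finset.sum_add_distrib, hcsum, ← Finset.smul_sum, ha2,
      smul_zero, add_zero]
  -- nonnegativity at the endpoints
  have hwp_nonneg : ∀ x ∈ X, 0 ≤ wp x := by
    intro x hx
    rcases lt_or_gt_of_ne (hanz x hx) with hax | hax
    · have hle : tp ≤ c x / (-a x) := Finset.inf'_le _ (Finset.mem_filter.mpr ⟨hx, hax⟩)
      rw [le_div_iff₀ (by linarith : (0:ℝ) < -a x)] at hle
      have : tp * -a x = -(tp * a x) := by ring
      rw [this] at hle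
      simp only [hwp]; linarith
    · have := mul_nonneg htpnn hax.le
      have := hc0 x hx
      simp only [hwp]; linarith
  have hwm_nonneg : ∀ x ∈ X, 0 ≤ wm x := by
    intro x hx
    rcases lt_or_gt_of_ne (hanz x hx) with hax | hax
    · have h1 : 0 ≤ tm * a x := by nlinarith
      have := hc0 x hx
      simp only [hwm]; linarith
    · have hle : -c x / a x ≤ tm :=
        Finset.le_sup' (fun x => -c x / a x)
          (show x ∈ P from Finset.mem_filter.mpr ⟨hx, hax⟩)
      rw [div_le_iff₀ hax] at hle
      simp only [hwm]; linarith
  -- the endpoint zero coordinates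
  obtain ⟨xp, hxpN, hxp⟩ := Finset.exists_mem_eq_inf' hNne (fun x => c x / (-a x))
  obtain ⟨xm, hxmP, hxm⟩ := Finset.exists_mem_eq_sup' hPne (fun x => -c x / a x)
  obtain ⟨hxpX, hxpneg⟩ := Finset.mem_filter.mp hxpN
  obtain ⟨hxmX, hxmpos⟩ := Finset.mem_filter.mp hxmP
  have hwpz : wp xp = 0 := by
    have h1 : c xp / -a xp * a xp = -c xp := by
      rw [div_mul_eq_mul_div, div_neg, mul_div_assoc, div_self (hanz xp hxpX), mul_one]
    simp only [hwp]
    rw [← htp] at hxp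
    rw [hxp, h1]; ring
  have hwmz : wm xm = 0 := by
    have h1 : -c xm / a xm * a xm = -c xm := div_mul_cancel₀ _ (hanz xm hxmX)
    simp only [hwm]
    rw [← htm] at hxm
    rw [hxm, h1]; ring
  have hxpxm : xp ≠ xm := fun h => absurd (h ▸ hxmpos) (not_lt.mpr hxpneg.le)
  -- membership of 0 in the convex hulls of the two erased sets
  have hconv : ∀ (z : EuclideanSpace ℝ (Fin d)), z ∈ X →
      ∀ v : EuclideanSpace ℝ (Fin d) → ℝ, (∀ x ∈ X, 0 ≤ v x) → (∑ x ∈ X, v x = 1) →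
      (∑ x ∈ X, v x • x = 0) → v z = 0 →
      (0 : EuclideanSpace ℝ (Fin d)) ∈ convexHull ℝ ((X.erase z : Finset _) :
        Set (EuclideanSpace ℝ (Fin d))) := by
    intro z hz v hv0 hv1 hv2 hvz
    rw [Finset.convexHull_eq]
    refine ⟨v, fun y hy => hv0 y (Finset.mem_of_mem_erase hy), ?_, ?_⟩
    · rw [Finset.sum_erase_eq_sub hz, hv1, hvz, sub_zero]
    · have hsum : ∑ y ∈ X.erase z, v y = 1 := by
        rw [Finset.sum_erase_eq_sub hz, hv1, hvz, sub_zero]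
      rw [Finset.centerMass_eq_of_sum_1 _ _ hsum]
      simp only [id]
      rw [Finset.sum_erase_eq_sub hz, hv2, hvz, zero_smul, sub_zero]
  refine ⟨X.erase xm, X.erase xp, ?_, ⟨Finset.erase_subset _ _, herase_card xm hxmX,
      hconv xm hxmX wm hwm_nonneg (hsum1 tm) (hsum2 tm) hwmz⟩,
    ⟨Finset.erase_subset _ _, herase_card xp hxpX,
      hconv xp hxpX wp hwp_nonneg (hsum1 tp) (hsum2 tp) hwpz⟩, ?_⟩
  · intro h
    have h1 : xp ∈ X.erase xm := Finset.mem_erase.mpr ⟨hxpxm, hxpX⟩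
    rw [h] at h1
    exact (Finset.notMem_erase xp X) h1
  -- uniqueness
  intro Y hYX hYcard hYconv
  obtain ⟨z, hzX, hzY⟩ : ∃ z ∈ X, z ∉ Y := by
    by_contra h
    push_neg at h
    have : X ⊆ Y := h
    have := Finset.card_le_card this
    omega
  have hYz : Y = X.erase z := by
    refine Finset.eq_of_subset_of_card_le (Finset.subset_erase.mpr ⟨hYX, hzY⟩) ?_
    rw [herase_card z hzX, hYcard]
  -- extract weights for Y
  rw [Finset.convexHull_eq] at hYconv
  obtain ⟨u, hu0, hu1, huc⟩ := hYconv
  set u' : EuclideanSpace ℝ (Fin d) → ℝ := fun x => if x ∈ Y then u x else 0 with hu'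
  have hu'0 : ∀ x ∈ X, 0 ≤ u' x := by
    intro x _
    simp only [hu']
    split
    · exact hu0 x ‹x ∈ Y›
    · exact le_refl 0
  have hu'1 : ∑ x ∈ X, u' x = 1 := by
    simp only [hu']
    rw [Finset.sum_ite_mem, Finset.inter_eq_right.mpr hYX, hu1]
  have hu'2 : ∑ x ∈ X, u' x • x = 0 := by
    have : ∀ x ∈ X, u' x • x = if x ∈ Y then u x • x else 0 := by
      intro x _
      simp only [hu']
      split <;> simp
    rw [Finset.sum_congr rfl this, Finset.sum_ite_mem, Finset.inter_eq_right.mpr hYX]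
    rw [Finset.centerMass_eq_of_sum_1 _ _ hu1] at huc
    simpa using huc
  have hu'z : u' z = 0 := by simp [hu', hzY]
  -- u' lies on the line c + t • a
  set t : ℝ := (u' xp - c xp) / a xp with ht
  have htxp : t * a xp = u' xp - c xp := div_mul_cancel₀ _ (hanz xp hxpX)
  have e1 : ∑ x ∈ X, (u' x - c x - t * a x) = 0 := by
    rw [Finset.sum_sub_distrib, Finset.sum_sub_distrib, ← Finset.mul_sum, hu'1, hc1, ha1]
    ring
  have e2 : ∑ x ∈ X, (u' x - c x - t * a x) • x = 0 := by
    have : ∀ x ∈ X, (u' x - c x - t * a x) • x = u' x • x - c x • x - t • (a x • x) := by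
      intro x _; rw [sub_smul, sub_smul, mul_smul]
    rw [Finset.sum_congr rfl this, Finset.sum_sub_distrib, Finset.sum_sub_distrib,
      ← Finset.smul_sum, hu'2, hcsum, ha2, smul_zero]
    simp
  have hgxp : u' xp - c xp - t * a xp = 0 := by rw [htxp]; ring
  have hg := my_dep_zero d X hcard h0 hgen (X.erase xp) (herase_sub xp)
    (le_of_eq (herase_card xp hxpX)) (fun x => u' x - c x - t * a x) ?_ ?_
  rotate_left
  · rw [Finset.sum_erase_eq_sub hxpX, e1, hgxp, sub_zero]
  · rw [Finset.sum_erase_eq_sub hxpX, e2]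
    show (0:EuclideanSpace ℝ (Fin d)) - (u' xp - c xp - t * a xp) • xp = 0
    rw [hgxp, zero_smul, sub_zero]
  have hline : ∀ x ∈ X, u' x = c x + t * a x := by
    intro x hx
    rcases eq_or_ne x xp with rfl | hne
    · linarith [htxp]
    · have := hg x (Finset.mem_erase.mpr ⟨hne, hx⟩)
      linarith
  -- bounds on t
  have htle : t ≤ tp := by
    rw [htp, Finset.le_inf'_iff]
    intro x hx
    obtain ⟨hxX, hax⟩ := Finset.mem_filter.mp hx
    rw [le_div_iff₀ (show (0:ℝ) < -a x by linarith)]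
    have h1 := hu'0 x hxX
    rw [hline x hxX] at h1
    have h2 : t * -a x = -(t * a x) := by ring
    linarith
  have htge : tm ≤ t := by
    rw [htm, Finset.sup'_le_iff]
    intro x hx
    obtain ⟨hxX, hax⟩ := Finset.mem_filter.mp hx
    rw [div_le_iff₀ hax]
    have h1 := hu'0 x hxX
    rw [hline x hxX] at h1
    linarith
  have hczt : c z + t * a z = 0 := by
    rw [← hline z hzX]; exact hu'z
  rcases lt_or_gt_of_ne (hanz z hzX) with haz | haz
  · -- a z < 0 : z = xp, Y = Y₂
    have hteq : t = c z / -a z := by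
      rw [eq_div_iff (neg_ne_zero.mpr (hanz z hzX))]
      linear_combination -hczt
    have h2 : tp ≤ t := by
      rw [hteq]
      exact Finset.inf'_le (fun x => c x / -a x)
        (show z ∈ N from Finset.mem_filter.mpr ⟨hzX, haz⟩)
    have htteq : t = tp := le_antisymm htle h2
    have hwpzz : wp z = 0 := by
      simp only [hwp]; rw [← htteq]; exact hczt
    have hzxp : z = xp := by
      by_contra hne
      exact htwo wp (hsum1 tp) (hsum2 tp) z hzX xp hxpX hne hwpzz hwpz
    right; rw [hYz, hzxp]
  · -- a z > 0 : z = xm, Y = Y₁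
    have hteq : t = -c z / a z := by
      rw [eq_div_iff (hanz z hzX)]
      linear_combination hczt
    have h2 : t ≤ tm := by
      rw [hteq]
      exact Finset.le_sup' (fun x => -c x / a x)
        (show z ∈ P from Finset.mem_filter.mpr ⟨hzX, haz⟩)
    have htteq : t = tm := le_antisymm h2 htge
    have hwmzz : wm z = 0 := by
      simp only [hwm]; rw [← htteq]; exact hczt
    have hzxm : z = xm := by
      by_contra hne
      exact htwo wm (hsum1 tm) (hsum2 tm) z hzX xm hxmX hne hwmzz hwmz
    left; rw [hYz, hzxm]
end

section
/- Let D be a finite directed graph whose vertex set is partitioned into three nonempty parts V_1, V_2, V_3, such that between any two vertices lying in different parts there is exactly one arc (in one of the two directions) and there are no arcs between vertices of the same part. Suppose every vertex of D has out-degree at least 1 and in-degree at least 1. Then D contains a directed cycle of length 3 (whose three vertices necessarily lie in three distinct parts), or a directed cycle of length 4 whose four vertices lie in exactly two of the parts. -/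
open scoped Classical

/-- A closed walk of length `m` in the digraph `A`. -/
abbrev IsCW {α : Type*} (A : α → α → Prop) (m : ℕ) : Prop :=
  0 < m ∧ ∃ w : ℕ → α, (∀ i < m, A (w i) (w (i + 1))) ∧ w m = w 0

/-- **Graph lemma from the planar proof.**
Let `D` be a finite orientation of a complete 3-partite graph (parts given by a surjection
`part : α → Fin 3`; between two vertices of different parts exactly one arc; no arcs inside
a part). If every vertex has out-degree at least 1 and in-degree at least 1, then `D`
contains a directed cycle of length 3, or a directed cycle of length 4 whose vertices lie
in exactly two of the parts. -/
theorem oriented_tripartite_short_cycle {α : Type*} [Fintype α]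
    (part : α → Fin 3) (hsurj : Function.Surjective part)
    (A : α → α → Prop)
    (horient : ∀ u v : α, part u ≠ part v → (A u v ↔ ¬ A v u))
    (hsame : ∀ u v : α, part u = part v → ¬ A u v)
    (hout : ∀ v : α, ∃ w, A v w)
    (hin : ∀ v : α, ∃ w, A w v) :
    (∃ a b c : α, a ≠ b ∧ a ≠ c ∧ b ≠ c ∧ A a b ∧ A b c ∧ A c a) ∨
    (∃ a b c d : α, a ≠ b ∧ a ≠ c ∧ a ≠ d ∧ b ≠ c ∧ b ≠ d ∧ c ≠ d ∧
      A a b ∧ A b c ∧ A c d ∧ A d a ∧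
      ({part a, part b, part c, part d} : Finset (Fin 3)).card = 2) := by
  -- basic facts about the orientation
  have hdiff : ∀ u v : α, A u v → part u ≠ part v := fun u v h he => hsame u v he h
  have hasym : ∀ u v : α, A u v → ¬ A v u := by
    intro u v h h'
    by_cases he : part u = part v
    · exact hsame u v he h
    · exact (horient u v he).mp h h'
  have hnev : ∀ u v : α, A u v → u ≠ v := by
    intro u v h he; subst he; exact hdiff u u h rfl
  have htotal : ∀ u v : α, part u ≠ part v → A u v ∨ A v u := by
    intro u v h
    by_cases h' : A v u
    · exact Or.inr h'
    · exact Or.inl ((horient u v h).mpr h')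
  -- existence of a closed walk
  have hP : ∃ m, IsCW A m := by
    obtain ⟨v0, -⟩ := hsurj 0
    choose f hf using hout
    obtain ⟨i, j, hij, heq⟩ := Finite.exists_ne_map_eq_of_infinite (fun k : ℕ => f^[k] v0)
    wlog hlt : i < j generalizing i j
    · exact this j i hij.symm heq.symm (by omega)
    refine ⟨j - i, by omega, fun k => f^[i + k] v0, ?_, ?_⟩
    · intro k _
      beta_reduce
      have e : i + (k + 1) = (i + k) + 1 := by omega
      rw [e, Function.iterate_succ_apply']
      exact hf _
    · beta_reduce
      have e : i + (j - i) = j := by omega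
      have e0 : i + 0 = i := by omega
      rw [e, e0]
      exact heq.symm
  -- take a shortest closed walk
  obtain ⟨n, ⟨hn0, w, hw, hwc⟩, hmin⟩ : ∃ n, IsCW A n ∧ ∀ m < n, ¬ IsCW A m :=
    ⟨Nat.find hP, Nat.find_spec hP, fun m hm => Nat.find_min hP hm⟩
  -- n ≥ 3
  have h3 : 3 ≤ n := by
    by_contra h
    have h1 : ¬ IsCW A 1 := by
      rintro ⟨-, w', hw', hc'⟩
      have h0 := hw' 0 (by norm_num)
      rw [zero_add, hc'] at h0
      exact hnev _ _ h0 rfl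
    have h2 : ¬ IsCW A 2 := by
      rintro ⟨-, w', hw', hc'⟩
      have h01 := hw' 0 (by norm_num)
      have h12 := hw' 1 (by norm_num)
      rw [zero_add] at h01
      rw [show (1 : ℕ) + 1 = 2 from rfl, hc'] at h12
      exact hasym _ _ h01 h12
    have : n = 1 ∨ n = 2 := by omega
    rcases this with rfl | rfl
    · exact h1 ⟨hn0, w, hw, hwc⟩
    · exact h2 ⟨hn0, w, hw, hwc⟩
  -- shortcut 1 : a backward chord at distance 2 gives a closed walk of length 3
  have S1 : ∀ i, i + 2 ≤ n → A (w (i + 2)) (w i) → IsCW A 3 := by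
    intro i hi hc
    refine ⟨by norm_num, fun k => if k = 3 then w i else w (i + k), ?_, ?_⟩
    · intro k hk
      interval_cases k
      · simpa using hw i (by omega)
      · have := hw (i + 1) (by omega)
        rw [show i + 1 + 1 = i + 2 from rfl] at this
        simpa using this
      · simpa using hc
    · simp
  -- shortcut 2 : a forward chord at distance 2 gives a closed walk of length n-1
  have S2 : ∀ i, i + 2 ≤ n → A (w i) (w (i + 2)) → IsCW A (n - 1) := by
    intro i hi hc
    refine ⟨by omega, fun k => if k ≤ i then w k else w (k + 1), ?_, ?_⟩
    · intro k hk
      beta_reduce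
      rcases lt_trichotomy k i with h | rfl | h
      · rw [if_pos (by omega), if_pos (by omega)]
        exact hw k (by omega)
      · rw [if_pos le_rfl, if_neg (by omega)]
        exact hc
      · rw [if_neg (by omega), if_neg (by omega)]
        have := hw (k + 1) (by omega)
        rwa [show k + 1 + 1 = (k + 1) + 1 from rfl] at this
    · beta_reduce
      rw [if_neg (by omega), if_pos (by omega), show n - 1 + 1 = n from by omega]
      exact hwc
  -- two steps along a shortest walk of length ≥ 4 stay in the same part
  have parteq : ∀ i, i + 2 ≤ n → 4 ≤ n → part (w i) = part (w (i + 2)) := by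
    intro i hi h4
    by_contra hne'
    rcases htotal _ _ hne' with hc | hc
    · exact hmin (n - 1) (by omega) (S2 i hi hc)
    · exact hmin 3 (by omega) (S1 i hi hc)
  -- rule out n ≥ 5
  rcases Nat.lt_or_ge n 5 with h5 | h5
  · have hn34 : n = 3 ∨ n = 4 := by omega
    rcases hn34 with rfl | rfl
    · -- length-3 cycle
      left
      have h01 : A (w 0) (w 1) := by simpa using hw 0 (by norm_num)
      have h12 : A (w 1) (w 2) := by simpa using hw 1 (by norm_num)
      have h20 : A (w 2) (w 0) := by
        have := hw 2 (by norm_num)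
        rwa [show (2 : ℕ) + 1 = 3 from rfl, hwc] at this
      exact ⟨w 0, w 1, w 2, hnev _ _ h01, (hnev _ _ h20).symm, hnev _ _ h12, h01, h12, h20⟩
    · -- length-4 cycle in two parts
      right
      have h01 : A (w 0) (w 1) := by simpa using hw 0 (by norm_num)
      have h12 : A (w 1) (w 2) := by simpa using hw 1 (by norm_num)
      have h23 : A (w 2) (w 3) := by simpa using hw 2 (by norm_num)
      have h30 : A (w 3) (w 0) := by
        have := hw 3 (by norm_num)
        rwa [show (3 : ℕ) + 1 = 4 from rfl, hwc] at this
      have p02 : part (w 0) = part (w 2) := by simpa using parteq 0 (by norm_num) (by norm_num)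
      have p13 : part (w 1) = part (w 3) := by simpa using parteq 1 (by norm_num) (by norm_num)
      have hac : w 0 ≠ w 2 := by
        intro h
        exact hasym _ _ h01 (by rw [h]; exact h12)
      have hbd : w 1 ≠ w 3 := by
        intro h
        exact hasym _ _ h12 (by rw [h]; exact h23)
      refine ⟨w 0, w 1, w 2, w 3, hnev _ _ h01, hac, (hnev _ _ h30).symm, hnev _ _ h12, hbd,
        hnev _ _ h23, h01, h12, h23, h30, ?_⟩
      rw [← p02, ← p13]
      have hset : ({part (w 0), part (w 1), part (w 0), part (w 1)} : Finset (Fin 3))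
          = {part (w 0), part (w 1)} := by
        ext x
        simp only [Finset.mem_insert, Finset.mem_singleton]
        tauto
      rw [hset]
      exact Finset.card_pair (hdiff _ _ h01)
  · -- n ≥ 5 : contradiction
    exfalso
    have p02 : part (w 0) = part (w 2) := by simpa using parteq 0 (by omega) (by omega)
    have p24 : part (w 2) = part (w 4) := by simpa using parteq 2 (by omega) (by omega)
    have h01 : A (w 0) (w 1) := by simpa using hw 0 (by omega)
    have h14 : part (w 1) ≠ part (w 4) := by
      intro h
      exact hdiff _ _ h01 ((p02.trans p24).trans h.symm)
    rcases htotal _ _ h14 with hc | hc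
    · -- forward chord w1 → w4 : closed walk of length n - 2
      refine hmin (n - 2) (by omega) ⟨by omega, fun k => if k ≤ 1 then w k else w (k + 2), ?_, ?_⟩
      · intro k hk
        beta_reduce
        rcases lt_trichotomy k 1 with h | rfl | h
        · rw [if_pos (by omega), if_pos (by omega)]
          have hk0 : k = 0 := by omega
          subst hk0
          exact hw 0 (by omega)
        · rw [if_pos le_rfl, if_neg (by omega)]
          exact hc
        · rw [if_neg (by omega), if_neg (by omega)]
          have := hw (k + 2) (by omega)
          rwa [show k + 2 + 1 = (k + 1) + 2 from by omega] at this
      · beta_reduce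
        rw [if_neg (by omega), if_pos (by omega), show n - 2 + 2 = n from by omega]
        exact hwc
    · -- backward chord w4 → w1 : closed walk of length 4
      refine hmin 4 (by omega) ⟨by norm_num, fun k => if k = 4 then w 1 else w (1 + k), ?_, ?_⟩
      · intro k hk
        interval_cases k
        · have := hw 1 (by omega)
          simpa using this
        · have := hw 2 (by omega)
          rw [show (2 : ℕ) + 1 = 3 from rfl] at this
          simpa [show (1 : ℕ) + 1 = 2 from rfl, show (1 : ℕ) + 2 = 3 from rfl] using this
        · have := hw 3 (by omega)
          rw [show (3 : ℕ) + 1 = 4 from rfl] at this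
          simpa [show (1 : ℕ) + 2 = 3 from rfl, show (1 : ℕ) + 3 = 4 from rfl] using this
        · simpa [show (1 : ℕ) + 3 = 4 from rfl] using hc
      · simp
end
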